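/- Let M be a compact topological space and H : [0,1] × M → ℝ continuous with H > 0 everywhere. Then there exists an orientation-preserving C¹ diffeomorphism s : [0,1] → [0,1] with s(0)=0, s(1)=1, such that the reparametrized function G(t,x) = s'(t) · H(s(t), x) satisfies min_{(t,x)} G(t,x) = ∫₀¹ (min_x H(t,x)) dt. -/

import Mathlib

open Set

-- helper: min attained
lemma min_attained {M : Type*} [TopologicalSpace M] [CompactSpace M] [Nonempty M]
    (f : M → ℝ) (hf : Continuous f) :
    ∃ x₀ : M, (⨅ x : M, f x) = f x₀ ∧ ∀ x, f x₀ ≤ f x := by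
  obtain ⟨x₀, -, hx₀⟩ := isCompact_univ.exists_isMinOn univ_nonempty hf.continuousOn
  refine ⟨x₀, le_antisymm (ciInf_le (isCompact_range hf).bddBelow x₀)
    (le_ciInf fun x => hx₀ (mem_univ x)), fun x => hx₀ (mem_univ x)⟩

-- helper: continuity of parametric min
lemma continuous_parametric_min {M : Type*} [TopologicalSpace M] [CompactSpace M] [Nonempty M]
    (H : ℝ → M → ℝ) (hH : Continuous fun p : ℝ × M => H p.1 p.2) :
    Continuous fun t => ⨅ x : M, H t x := by
  have hHt : ∀ t : ℝ, Continuous (H t) := fun t =>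
    hH.comp (continuous_const.prodMk continuous_id)
  rw [continuous_iff_continuousAt]
  intro t₀
  rw [ContinuousAt, tendsto_order]
  constructor
  · intro a ha
    -- a < m t₀, use tube lemma
    have hU : IsOpen {p : ℝ × M | a < H p.1 p.2} := isOpen_lt continuous_const hH
    have hsub : ({t₀} : Set ℝ) ×ˢ (univ : Set M) ⊆ {p : ℝ × M | a < H p.1 p.2} := by
      rintro ⟨t, x⟩ ⟨ht, -⟩
      simp only [mem_singleton_iff] at ht
      rw [ht]
      obtain ⟨x₀, he, hm⟩ := min_attained (H t₀) (hHt t₀)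
      exact lt_of_lt_of_le (he ▸ ha) (hm x)
    obtain ⟨u, v, hu, hv, htu, hMv, huv⟩ :=
      generalized_tube_lemma isCompact_singleton isCompact_univ hU hsub
    filter_upwards [hu.mem_nhds (htu rfl)] with t ht
    obtain ⟨x₀, he, -⟩ := min_attained (H t) (hHt t)
    rw [he]
    exact huv (Set.mk_mem_prod ht (hMv (mem_univ x₀)))
  · intro b hb
    obtain ⟨x₀, he, -⟩ := min_attained (H t₀) (hHt t₀)
    have : ContinuousAt (fun t => H t x₀) t₀ :=
      (hH.comp (continuous_id.prodMk continuous_const)).continuousAt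
    have hev : ∀ᶠ t in nhds t₀, H t x₀ < b :=
      this.eventually_lt continuousAt_const (he ▸ hb)
    filter_upwards [hev] with t ht
    exact lt_of_le_of_lt (ciInf_le (isCompact_range (hHt t)).bddBelow x₀) ht


/-- reparametrization lemma: a positive Hamiltonian `H` on `[0,1] × M`
(`M` compact) can be time-reparametrized by an orientation-preserving C¹ diffeomorphism
`s` of `[0,1]` so that the global minimum of `G(t,x) = s'(t)·H(s(t),x)` equals
`∫₀¹ min_x H(t,x) dt`. -/
theorem reparametrize_to_mean_power {M : Type*} [TopologicalSpace M] [CompactSpace M]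
    [Nonempty M] (H : ℝ → M → ℝ) (hH : Continuous fun p : ℝ × M => H p.1 p.2)
    (hpos : ∀ t ∈ Icc (0 : ℝ) 1, ∀ x : M, 0 < H t x) :
    ∃ s : ℝ → ℝ, ContDiff ℝ 1 s ∧ (∀ t ∈ Icc (0 : ℝ) 1, 0 < deriv s t) ∧
      s 0 = 0 ∧ s 1 = 1 ∧ MapsTo s (Icc (0 : ℝ) 1) (Icc (0 : ℝ) 1) ∧
      BijOn s (Icc (0 : ℝ) 1) (Icc (0 : ℝ) 1) ∧
      (⨅ p : Icc (0 : ℝ) 1 × M, deriv s p.1 * H (s p.1) p.2) =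
        ∫ t in (0 : ℝ)..1, ⨅ x : M, H t x := by
  classical
  set m : ℝ → ℝ := fun t => ⨅ x : M, H t x with hm_def
  have hHt : ∀ t : ℝ, Continuous (H t) := fun t => hH.comp (continuous_const.prodMk continuous_id)
  have hm_cont : Continuous m := continuous_parametric_min H hH
  have hm_le : ∀ t x, m t ≤ H t x := fun t x => ciInf_le (isCompact_range (hHt t)).bddBelow x
  have hm_pos : ∀ t ∈ Icc (0:ℝ) 1, 0 < m t := by
    intro t ht
    obtain ⟨x₀, he, -⟩ := min_attained (H t) (hHt t)
    rw [hm_def]; dsimp only; rw [he]; exact hpos t ht x₀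
  -- clamp to [0,1]
  set proj : ℝ → ℝ := fun t => max 0 (min 1 t) with hproj
  have hproj_mem : ∀ t, proj t ∈ Icc (0:ℝ) 1 := fun t =>
    ⟨le_max_left _ _, max_le zero_le_one (min_le_left _ _)⟩
  have hproj_id : ∀ t ∈ Icc (0:ℝ) 1, proj t = t := fun t ht => by
    rw [hproj]; dsimp only; rw [min_eq_right ht.2, max_eq_right ht.1]
  have hproj_cont : Continuous proj := continuous_const.max (continuous_const.min continuous_id)
  set mc : ℝ → ℝ := fun t => m (proj t) with hmc
  have hmc_cont : Continuous mc := hm_cont.comp hproj_cont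
  have hmc_pos : ∀ t, 0 < mc t := fun t => hm_pos _ (hproj_mem t)
  -- uniform positive lower bound δ
  obtain ⟨t₁, ht₁, hmin⟩ :=
    isCompact_Icc.exists_isMinOn (nonempty_Icc.2 zero_le_one) hm_cont.continuousOn
  have hδpos : 0 < m t₁ := hm_pos t₁ ht₁
  have hδle : ∀ t, m t₁ ≤ mc t := fun t => hmin (hproj_mem t)
  -- F = antiderivative of mc
  set F : ℝ → ℝ := fun u => ∫ x in (0:ℝ)..u, mc x with hF
  have hFd : ∀ u, HasDerivAt F (mc u) u := fun u =>
    intervalIntegral.integral_hasDerivAt_right (hmc_cont.intervalIntegrable _ _)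
      hmc_cont.stronglyMeasurable.stronglyMeasurableAtFilter hmc_cont.continuousAt
  have hFdiff : Differentiable ℝ F := fun u => (hFd u).differentiableAt
  have hFc : Continuous F := hFdiff.continuous
  have hF0 : F 0 = 0 := intervalIntegral.integral_same
  have hFmono : StrictMono F := strictMono_of_deriv_pos fun u => by
    rw [(hFd u).deriv]; exact hmc_pos u
  have hFbound : ∀ u v : ℝ, u ≤ v → m t₁ * (v - u) ≤ F v - F u := by
    intro u v huv
    have h1 : F v - F u = ∫ x in u..v, mc x :=
      intervalIntegral.integral_interval_sub_left (hmc_cont.intervalIntegrable _ _)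
        (hmc_cont.intervalIntegrable _ _)
    have h2 : (∫ x in u..v, (m t₁ : ℝ)) ≤ ∫ x in u..v, mc x :=
      intervalIntegral.integral_mono_on huv intervalIntegrable_const
        (hmc_cont.intervalIntegrable _ _) fun x _ => hδle x
    rw [intervalIntegral.integral_const, smul_eq_mul] at h2
    rw [h1]
    calc m t₁ * (v - u) = (v - u) * m t₁ := mul_comm _ _
      _ ≤ _ := h2
  have htop : Filter.Tendsto F Filter.atTop Filter.atTop := by
    have hle : ∀ᶠ u in Filter.atTop, m t₁ * u ≤ F u := by
      filter_upwards [Filter.eventually_ge_atTop (0:ℝ)] with u hu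
      have := hFbound 0 u hu
      rw [hF0] at this; nlinarith
    exact Filter.tendsto_atTop_mono' _ hle
      ((Filter.tendsto_const_mul_atTop_of_pos hδpos).2 Filter.tendsto_id)
  have hbot : Filter.Tendsto F Filter.atBot Filter.atBot := by
    refine Filter.tendsto_atBot_mono' _ ?_ ((Filter.tendsto_const_mul_atBot_of_pos hδpos).2
      Filter.tendsto_id)
    filter_upwards [Filter.eventually_le_atBot (0:ℝ)] with u hu
    simp only [id_eq]
    have h1 := hFbound u 0 hu
    rw [hF0] at h1
    have h2 : m t₁ * (0 - u) = -(m t₁ * u) := by ring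
    linarith
  have hFsurj : Function.Surjective F := hFc.surjective htop hbot
  set e := StrictMono.orderIsoOfSurjective F hFmono hFsurj with he
  have heF : ∀ u, e.symm (F u) = u := fun u =>
    StrictMono.orderIsoOfSurjective_symm_apply_self F hFmono hFsurj u
  have hFe : ∀ y, F (e.symm y) = y := fun y =>
    StrictMono.orderIsoOfSurjective_self_symm_apply F hFmono hFsurj y
  have hinv_cont : Continuous (e.symm : ℝ → ℝ) := OrderIso.continuous _
  set c : ℝ := ∫ t in (0:ℝ)..1, m t with hc
  have hF1 : F 1 = c := by
    refine intervalIntegral.integral_congr fun t ht => ?_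
    rw [uIcc_of_le zero_le_one] at ht
    rw [hmc]; dsimp only; rw [hproj_id t ht]
  have hcpos : 0 < c := by
    have := hFbound 0 1 zero_le_one
    rw [hF0, hF1] at this; nlinarith
  set s : ℝ → ℝ := fun t => e.symm (c * t) with hs
  have hinvd : ∀ y : ℝ, HasDerivAt (e.symm : ℝ → ℝ) (mc (e.symm y))⁻¹ y := fun y =>
    HasDerivAt.of_local_left_inverse hinv_cont.continuousAt (hFd (e.symm y))
      (ne_of_gt (hmc_pos _)) (Filter.Eventually.of_forall hFe)
  have hsd : ∀ t, HasDerivAt s (c * (mc (s t))⁻¹) t := by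
    intro t
    have h1 : HasDerivAt (fun t : ℝ => c * t) c t := by
      simpa using (hasDerivAt_id t).const_mul c
    have h2 := (hinvd (c * t)).comp t h1
    rw [hs]
    exact h2.congr_deriv (mul_comm _ _)
  have hsderiv : ∀ t, deriv s t = c * (mc (s t))⁻¹ := fun t => (hsd t).deriv
  have hs_cont : Continuous s := hinv_cont.comp (continuous_const.mul continuous_id)
  have hs_diff : Differentiable ℝ s := fun t => (hsd t).differentiableAt
  have hcd : ContDiff ℝ 1 s := by
    rw [contDiff_one_iff_deriv]
    refine ⟨hs_diff, ?_⟩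
    have hde : deriv s = fun t => c * (mc (s t))⁻¹ := funext hsderiv
    rw [hde]
    exact continuous_const.mul ((hmc_cont.comp hs_cont).inv₀ fun t => ne_of_gt (hmc_pos _))
  have hs0 : s 0 = 0 := by
    have h := heF 0
    rw [hF0] at h
    rw [hs]; dsimp only; rw [mul_zero]; exact h
  have hs1 : s 1 = 1 := by
    have h := heF 1
    rw [hF1] at h
    rw [hs]; dsimp only; rw [mul_one]; exact h
  have hsmono : StrictMono s := fun a b hab =>
    e.symm.strictMono (mul_lt_mul_of_pos_left hab hcpos)
  have hmaps : MapsTo s (Icc (0:ℝ) 1) (Icc (0:ℝ) 1) := fun t ht =>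
    ⟨hs0 ▸ hsmono.monotone ht.1, hs1 ▸ hsmono.monotone ht.2⟩
  have hsurjOn : SurjOn s (Icc (0:ℝ) 1) (Icc (0:ℝ) 1) := by
    have h := intermediate_value_Icc zero_le_one hs_cont.continuousOn
    rw [hs0, hs1] at h
    exact h
  have hbij : BijOn s (Icc (0:ℝ) 1) (Icc (0:ℝ) 1) := ⟨hmaps, hsmono.injective.injOn, hsurjOn⟩
  have hderiv_pos : ∀ t ∈ Icc (0:ℝ) 1, 0 < deriv s t := fun t _ => by
    rw [hsderiv]; exact mul_pos hcpos (inv_pos.2 (hmc_pos _))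
  refine ⟨s, hcd, hderiv_pos, hs0, hs1, hmaps, hbij, ?_⟩
  haveI : Nonempty (Icc (0:ℝ) 1) := Nonempty.to_subtype (nonempty_Icc.2 zero_le_one)
  have key : ∀ t ∈ Icc (0:ℝ) 1, mc (s t) = m (s t) := fun t ht => by
    rw [hmc]; dsimp only; rw [hproj_id _ (hmaps ht)]
  have hlb : ∀ p : Icc (0:ℝ) 1 × M, c ≤ deriv s p.1 * H (s p.1) p.2 := by
    rintro ⟨t, x⟩
    dsimp only
    rw [hsderiv, key t t.2]
    have h1 : m (s t) ≤ H (s t) x := hm_le _ x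
    have h2 : (0:ℝ) < m (s t) := hm_pos _ (hmaps t.2)
    calc c = c * (m (s t))⁻¹ * m (s t) := by field_simp
      _ ≤ c * (m (s t))⁻¹ * H (s t) x :=
        mul_le_mul_of_nonneg_left h1 (le_of_lt (mul_pos hcpos (inv_pos.2 h2)))
  obtain ⟨x₀, he0, -⟩ := min_attained (H 0) (hHt 0)
  have h01 : (0:ℝ) ∈ Icc (0:ℝ) 1 := left_mem_Icc.2 zero_le_one
  have hm0 : m 0 = H 0 x₀ := he0
  have hval : deriv s (0:ℝ) * H (s 0) x₀ = c := by
    rw [hsderiv, key 0 h01, hs0, hm0]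
    field_simp
    rw [div_self (ne_of_gt (hpos 0 h01 x₀))]
  have hbdd : BddBelow (Set.range fun p : Icc (0:ℝ) 1 × M => deriv s p.1 * H (s p.1) p.2) :=
    ⟨c, by rintro y ⟨p, rfl⟩; exact hlb p⟩
  refine le_antisymm ?_ (le_ciInf hlb)
  exact (ciInf_le hbdd ((⟨0, h01⟩ : Icc (0:ℝ) 1), x₀)).trans_eq hval
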